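/- Let F : ℝ^n → ℝ be convex, differentiable, with F(0) ≤ 0, L-smooth with respect to ‖·‖, and satisfying F(s) ≥ B² · dist(s, S)² for some B > 0 (condition with p = 2, A = 0), where S is the polar cone of X with sup_{x∈X}‖x‖_* ≤ D. If the Blackwell conditions ⟨∇F(S_{t-1}+m_t), s_t⟩ ≤ 0 hold for all t (no step size, η_t = 1), then sup_{x∈X}⟨S_T, x⟩ ≤ (D/B) · √((L/2)∑_{t=1}^T ‖s_t − m_t‖²). -/

import Mathlib

/-!
Along the iterates, convexity and `L`-smoothness give
`F (S t) ≤ F (S (t-1) + m t) + ⟪∇F (S (t-1) + m t), s t - m t⟫ + L/2 ‖s t - m t‖²`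
and `F (S (t-1) + m t) ≤ F (S (t-1)) + ⟪∇F (S (t-1) + m t), m t⟫`; adding them, the Blackwell
condition kills the gradient terms, so `F` grows by at most `L/2 ‖s t - m t‖²` per round.
Telescoping from `F 0 ≤ 0` and the distance lower bound give
`dist (S T, polar X) ≤ √((L/2) ∑ ‖s t - m t‖²) / B`, and `⟪S T, x⟫ ≤ ‖x‖ · dist (S T, polar X)`
for `x ∈ X`.
-/

open RealInnerProductSpace

section FirstOrderConvexity

variable {E : Type*} [NormedAddCommGroup E] [NormedSpace ℝ E] {s : Set E} {f : E → ℝ}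

theorem ConvexOn.add_fderiv_sub_le {f' : E →L[ℝ] ℝ} {x y : E} (hf : ConvexOn ℝ s f)
    (hx : x ∈ s) (hy : y ∈ s) (hfx : HasFDerivAt f f' x) :
    f x + f' (y - x) ≤ f y := by
  let ℓ := AffineMap.lineMap (k := ℝ) x y
  have hℓ : HasDerivAt (f ∘ ℓ) (f' (y - x)) 0 := by
    refine HasFDerivAt.comp_hasDerivAt (0 : ℝ) ?_ AffineMap.hasDerivAt_lineMap
    simpa [ℓ] using hfx
  have h := (hf.comp_affineMap ℓ).le_slope_of_hasDerivAt (x := 0) (y := 1)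
    (by simpa [ℓ] using hx) (by simpa [ℓ] using hy) one_pos hℓ
  simp only [slope_def_field, Function.comp_apply, ℓ, AffineMap.lineMap_apply_zero,
    AffineMap.lineMap_apply_one, sub_zero, div_one] at h
  linarith

end FirstOrderConvexity

section InnerProduct

variable {E : Type*} [NormedAddCommGroup E] [InnerProductSpace ℝ E]

theorem ConvexOn.add_inner_gradient_sub_le [CompleteSpace E] {s : Set E} {f : E → ℝ} {g x y : E}
    (hf : ConvexOn ℝ s f) (hx : x ∈ s) (hy : y ∈ s) (hfx : HasGradientAt f g x) :
    f x + ⟪g, y - x⟫ ≤ f y := by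
  simpa using hf.add_fderiv_sub_le hx hy (hasGradientAt_iff_hasFDerivAt.mp hfx)

theorem potential_add_le_of_inner_gradient_nonpos [CompleteSpace E]
    {F : E → ℝ} {g : E → E} {L : ℝ}
    (hdiff : ∀ x, HasGradientAt F (g x) x) (hconv : ConvexOn ℝ Set.univ F)
    (hsmooth : ∀ x y, F (x + y) ≤ F x + ⟪g x, y⟫ + L / 2 * ‖y‖ ^ 2)
    {S s m : E} (hblackwell : ⟪g (S + m), s⟫ ≤ 0) :
    F (S + s) ≤ F S + L / 2 * ‖s - m‖ ^ 2 := by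
  have hupper := hsmooth (S + m) (s - m)
  have hlower := hconv.add_inner_gradient_sub_le (Set.mem_univ (S + m)) (Set.mem_univ S)
    (hdiff (S + m))
  rw [add_add_sub_cancel] at hupper
  rw [sub_add_cancel_left, inner_neg_right] at hlower
  rw [inner_sub_right] at hupper
  linarith

theorem inner_le_norm_mul_infDist {K : Set E} (hK : K.Nonempty) {x : E}
    (hKx : ∀ z ∈ K, ⟪z, x⟫ ≤ 0) (v : E) :
    ⟪v, x⟫ ≤ ‖x‖ * Metric.infDist v K := by
  have hz : ∀ z ∈ K, ⟪v, x⟫ ≤ ‖x‖ * dist v z := fun z hz => calc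
    ⟪v, x⟫ = ⟪v - z, x⟫ + ⟪z, x⟫ := by rw [← inner_add_left, sub_add_cancel]
    _ ≤ ‖v - z‖ * ‖x‖ + 0 := add_le_add (real_inner_le_norm _ _) (hKx z hz)
    _ = ‖x‖ * dist v z := by rw [dist_eq_norm, add_zero, mul_comm]
  rcases (norm_nonneg x).eq_or_lt with hx | hx
  · simp [norm_eq_zero.mp hx.symm]
  · rw [← div_le_iff₀' hx, Metric.le_infDist hK]
    exact fun z hzK => (div_le_iff₀' hx).mpr (hz z hzK)

end InnerProduct

theorem le_add_sum_Icc_of_le_add {u c : ℕ → ℝ} {T : ℕ}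
    (h : ∀ t, 1 ≤ t → t ≤ T → u t ≤ u (t - 1) + c t) :
    u T ≤ u 0 + ∑ t ∈ Finset.Icc 1 T, c t := by
  induction T with
  | zero => simp
  | succ T ih =>
    rw [Finset.sum_Icc_succ_top (by omega)]
    have hstep := h (T + 1) (by omega) le_rfl
    have hprev := ih fun t ht1 htT => h t ht1 (by omega)
    rw [Nat.add_sub_cancel] at hstep
    linarith

theorem le_sqrt_div_of_sq_mul_sq_le {B d R : ℝ} (hB : 0 < B) (h : B ^ 2 * d ^ 2 ≤ R) :
    d ≤ √R / B := by
  rw [le_div_iff₀ hB]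
  exact (le_abs_self _).trans (Real.abs_le_sqrt (by linarith [mul_pow d B 2]))

/-- Optimistic regret bound for potentials with `p = 2`, `A = 0`
(no step size needed): `sup_{x∈X}⟪S_T, x⟫ ≤ (D/B)√((L/2)∑‖s_t - m_t‖²)`. -/
theorem stmt_16 {n : ℕ} (T : ℕ)
    (F : EuclideanSpace ℝ (Fin n) → ℝ)
    (g : EuclideanSpace ℝ (Fin n) → EuclideanSpace ℝ (Fin n))
    (hdiff : ∀ x, HasGradientAt F (g x) x)
    (hconv : ConvexOn ℝ Set.univ F) (hF0 : F 0 ≤ 0)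
    (L B D : ℝ) (hB : 0 < B)
    (hsmooth : ∀ x y, F (x + y) ≤ F x + ⟪g x, y⟫ + L / 2 * ‖y‖ ^ 2)
    (X : Set (EuclideanSpace ℝ (Fin n))) (hD : ∀ x ∈ X, ‖x‖ ≤ D)
    (hdist : ∀ v : EuclideanSpace ℝ (Fin n),
      B ^ 2 * Metric.infDist v {s : EuclideanSpace ℝ (Fin n) | ∀ x ∈ X, ⟪s, x⟫ ≤ 0} ^ 2
        ≤ F v)
    (s m : ℕ → EuclideanSpace ℝ (Fin n))
    (S : ℕ → EuclideanSpace ℝ (Fin n))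
    (hS : ∀ t, S t = ∑ k ∈ Finset.Icc 1 t, s k)
    (hblackwell : ∀ t, 1 ≤ t → t ≤ T → ⟪g (S (t - 1) + m t), s t⟫ ≤ 0) :
    ∀ x ∈ X, ⟪S T, x⟫ ≤ (D / B) *
      Real.sqrt (L / 2 * ∑ t ∈ Finset.Icc 1 T, ‖s t - m t‖ ^ 2) := by
  intro x hx
  set K := {s : EuclideanSpace ℝ (Fin n) | ∀ x ∈ X, ⟪s, x⟫ ≤ 0}
  have hS_succ : ∀ t, 1 ≤ t → S t = S (t - 1) + s t := fun t ht => by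
    obtain ⟨k, rfl⟩ := Nat.exists_eq_add_of_le' ht
    rw [hS, hS, Nat.add_sub_cancel, Finset.sum_Icc_succ_top (by omega)]
  have hFT : F (S T) ≤ L / 2 * ∑ t ∈ Finset.Icc 1 T, ‖s t - m t‖ ^ 2 := by
    have htelescope := le_add_sum_Icc_of_le_add (u := fun t => F (S t))
      (c := fun t => L / 2 * ‖s t - m t‖ ^ 2) fun t ht1 htT => by
        rw [hS_succ t ht1]
        exact potential_add_le_of_inner_gradient_nonpos hdiff hconv hsmooth (hblackwell t ht1 htT)
    have hS0 : S 0 = 0 := by simp [hS]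
    simp only [hS0, ← Finset.mul_sum] at htelescope
    linarith
  have hdistT := le_sqrt_div_of_sq_mul_sq_le hB ((hdist (S T)).trans hFT)
  calc ⟪S T, x⟫ ≤ ‖x‖ * Metric.infDist (S T) K :=
        inner_le_norm_mul_infDist ⟨0, fun y _ => by simp⟩
          (fun z (hz : ∀ y ∈ X, ⟪z, y⟫ ≤ 0) => hz x hx) (S T)
    _ ≤ D * (√(L / 2 * ∑ t ∈ Finset.Icc 1 T, ‖s t - m t‖ ^ 2) / B) :=
        mul_le_mul (hD x hx) hdistT Metric.infDist_nonneg ((norm_nonneg x).trans (hD x hx))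
    _ = _ := by ring
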